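/- Let λ > 0, c > 0, t > 0, and define p(u,t) = (e^{−λt}/c) [ −λ F(u,t) + (∂F/∂t)(u,t) + (2/λ)(∂²F/∂t²)(u,t) ], where F(u,t) = ∑_{k=0}^∞ (λ/(2c))^{2k} (c²t² − u²)^k / (k!)². Then the mean value of the process 𝒰(t), namely ∫₀^{ct} u · p(u,t) du + ct · e^{−λt}(1 + λt) (the last term accounting for the singular mass at u = ct), equals e^{−λt} [ (ct + 2c/λ) I₀(λt) + ct I₁(λt) − 2c/λ ]. -/

import Mathlib

/-!
With `B = (λ/2c)²` and `P(x) = ∑ xᵏ/(k!)²` one has `F(u,t) = P(B(c²t² − u²))`,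
`I₀(z) = P(z²/4)` and `I₁(z) = (z/2) P'(z²/4)`, so the two `t`-derivatives of `F` in the
density are values of `P'` and `P''` at the same point. The substitution `x = B(c²t² − u²)`
turns `∫₀^{ct} u · H(x) du` into `(1/2B) ∫₀^{Bc²t²} H(x) dx`, and each piece has an explicit
primitive: `P'` and `P''` integrate to `P` and `P'`, while `P` integrates to `x P'(x)` by
Bessel's equation `(x P')' = P`.
-/

/-- `F(u,t) = ∑_{k=0}^∞ (λ/(2c))^{2k} (c²t² − u²)^k / (k!)²`,
which equals `I₀((λ/c)√(c²t² − u²))` for `|u| ≤ ct`. -/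
noncomputable def F (lam c u t : ℝ) : ℝ :=
  ∑' k : ℕ, (lam / (2 * c)) ^ (2 * k) * (c ^ 2 * t ^ 2 - u ^ 2) ^ k /
    ((Nat.factorial k : ℝ)) ^ 2

/-- The density of the absolutely continuous component of the planar cyclic motion:
`p(u,t) = (e^{−λt}/c)[−λF + ∂F/∂t + (2/λ)∂²F/∂t²]`. -/
noncomputable def planarDensity (lam c u t : ℝ) : ℝ :=
  Real.exp (-(lam * t)) / c *
    (-(lam * F lam c u t) + deriv (fun s => F lam c u s) t +
      2 / lam * iteratedDeriv 2 (fun s => F lam c u s) t)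

/-- The modified Bessel function of the first kind of order zero. -/
noncomputable def besselI0 (x : ℝ) : ℝ :=
  ∑' k : ℕ, (x / 2) ^ (2 * k) / ((Nat.factorial k : ℝ)) ^ 2

/-- The modified Bessel function of the first kind of order one. -/
noncomputable def besselI1 (x : ℝ) : ℝ :=
  ∑' k : ℕ, (x / 2) ^ (2 * k + 1) / ((Nat.factorial k : ℝ) * (Nat.factorial (k + 1) : ℝ))

open Nat

noncomputable def powerSum (a : ℕ → ℝ) (x : ℝ) : ℝ := ∑' k, a k * x ^ k

def derivCoeff (a : ℕ → ℝ) (k : ℕ) : ℝ := (k + 1) * a (k + 1)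

def SummableEverywhere (a : ℕ → ℝ) : Prop := ∀ x : ℝ, Summable fun k => a k * x ^ k

lemma powerSum_zero (a : ℕ → ℝ) : powerSum a 0 = a 0 := by
  rw [powerSum, tsum_eq_single 0 fun k hk => by simp [zero_pow hk]]
  simp

section Entire

variable {a : ℕ → ℝ}

lemma summable_abs_mul_pow (ha : SummableEverywhere a) {R : ℝ} (hR : 0 ≤ R) :
    Summable fun n => |a n| * R ^ n :=
  (ha R).abs.congr fun n => by rw [abs_mul, abs_pow, abs_of_nonneg hR]

lemma abs_mul_deriv_pow_le {R y : ℝ} (hR : 1 ≤ R) (hy : |y| ≤ R) (n : ℕ) :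
    |a n * (n * y ^ (n - 1))| ≤ |a n| * (2 * R) ^ n := by
  have hn : (n : ℝ) ≤ 2 ^ n := by exact_mod_cast Nat.lt_two_pow_self.le
  have hy' : |y| ^ (n - 1) ≤ R ^ n :=
    (pow_le_pow_left₀ (abs_nonneg y) hy _).trans (pow_le_pow_right₀ hR (Nat.sub_le n 1))
  rw [abs_mul, abs_mul, abs_pow, Nat.abs_cast, mul_pow]
  gcongr

lemma summable_mul_deriv_pow (ha : SummableEverywhere a) (x : ℝ) :
    Summable fun n => a n * (n * x ^ (n - 1)) :=
  .of_norm_bounded (summable_abs_mul_pow ha (R := 2 * (|x| + 1)) (by positivity))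
    fun n => abs_mul_deriv_pow_le (by linarith [abs_nonneg x]) (by linarith) n

lemma tsum_mul_deriv_pow (ha : SummableEverywhere a) (x : ℝ) :
    ∑' n, a n * (n * x ^ (n - 1)) = powerSum (derivCoeff a) x := by
  rw [(summable_mul_deriv_pow ha x).tsum_eq_zero_add, powerSum]
  simp only [derivCoeff]
  simpa using tsum_congr fun k => by ring

lemma SummableEverywhere.derivCoeff (ha : SummableEverywhere a) :
    SummableEverywhere (derivCoeff a) := fun x =>
  ((summable_nat_add_iff 1).2 (summable_mul_deriv_pow ha x)).congr fun k => by
    simp only [_root_.derivCoeff]; push_cast; ring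

lemma hasDerivAt_powerSum (ha : SummableEverywhere a) (x : ℝ) :
    HasDerivAt (powerSum a) (powerSum (derivCoeff a) x) x := by
  set R := |x| + 1
  have hR : 1 ≤ R := by linarith [abs_nonneg x]
  rw [← tsum_mul_deriv_pow ha]
  refine hasDerivAt_tsum_of_isPreconnected (summable_abs_mul_pow ha (R := 2 * R) (by positivity))
    Metric.isOpen_ball (convex_ball 0 R).isPreconnected
    (fun n y _ => (hasDerivAt_pow n y).const_mul (a n))
    (fun n y hy => abs_mul_deriv_pow_le hR (mem_ball_zero_iff.1 hy).le n)
    (Metric.mem_ball_self (by positivity)) (ha 0) (mem_ball_zero_iff.2 (by simp [R]))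

lemma continuous_powerSum (ha : SummableEverywhere a) : Continuous (powerSum a) :=
  continuous_iff_continuousAt.2 fun x => (hasDerivAt_powerSum ha x).continuousAt

lemma SummableEverywhere.natCast_mul (ha : SummableEverywhere a) :
    SummableEverywhere fun k => k * a k := fun x =>
  ((summable_mul_deriv_pow ha x).mul_left x).congr fun k => by
    rcases k with _ | k
    · simp
    · simp only [Nat.add_sub_cancel, pow_succ]; ring

lemma powerSum_natCast_mul (ha : SummableEverywhere a) (x : ℝ) :
    powerSum (fun k => k * a k) x = x * powerSum (derivCoeff a) x := by
  rw [powerSum, (ha.natCast_mul x).tsum_eq_zero_add, powerSum, ← tsum_mul_left]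
  simp only [derivCoeff, pow_succ]
  push_cast
  simp only [zero_mul, zero_add]
  exact tsum_congr fun k => by ring

lemma hasDerivAt_powerSum_comp_sq (ha : SummableEverywhere a) (β γ s : ℝ) :
    HasDerivAt (fun s => powerSum a (β * s ^ 2 - γ))
      (2 * β * s * powerSum (derivCoeff a) (β * s ^ 2 - γ)) s := by
  have hinner : HasDerivAt (fun s => β * s ^ 2 - γ) (2 * β * s) s := by
    simpa [mul_comm, mul_left_comm] using ((hasDerivAt_pow 2 s).const_mul β).sub_const γ
  exact ((hasDerivAt_powerSum ha _).comp s hinner).congr_deriv (by ring)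

lemma deriv_powerSum_comp_sq (ha : SummableEverywhere a) (β γ : ℝ) :
    deriv (fun s => powerSum a (β * s ^ 2 - γ)) =
      fun s => 2 * β * s * powerSum (derivCoeff a) (β * s ^ 2 - γ) :=
  funext fun s => (hasDerivAt_powerSum_comp_sq ha β γ s).deriv

lemma iteratedDeriv_two_powerSum_comp_sq (ha : SummableEverywhere a) (β γ s : ℝ) :
    iteratedDeriv 2 (fun s => powerSum a (β * s ^ 2 - γ)) s =
      2 * β * powerSum (derivCoeff a) (β * s ^ 2 - γ) +
        (2 * β * s) ^ 2 * powerSum (derivCoeff (derivCoeff a)) (β * s ^ 2 - γ) := by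
  rw [iteratedDeriv_succ, iteratedDeriv_one, deriv_powerSum_comp_sq ha]
  have hlin : HasDerivAt (fun s => 2 * β * s) (2 * β) s := by
    simpa using (hasDerivAt_id s).const_mul (2 * β)
  refine ((hlin.mul (hasDerivAt_powerSum_comp_sq ha.derivCoeff β γ s)).deriv).trans ?_
  ring

end Entire

lemma integral_mul_comp_sub_mul_sq {H K : ℝ → ℝ} (hK : ∀ x, HasDerivAt K (H x) x)
    (hH : Continuous H) {κ : ℝ} (hκ : κ ≠ 0) (a b : ℝ) :
    ∫ u in (0 : ℝ)..a, u * H (b - κ * u ^ 2) = (K b - K (b - κ * a ^ 2)) / (2 * κ) := by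
  have hprim : ∀ u, HasDerivAt (fun u => -K (b - κ * u ^ 2) / (2 * κ))
      (u * H (b - κ * u ^ 2)) u := by
    intro u
    have hinner : HasDerivAt (fun u => b - κ * u ^ 2) (-(2 * κ * u)) u := by
      simpa [mul_comm, mul_left_comm] using ((hasDerivAt_pow 2 u).const_mul κ).const_sub b
    exact (((hK _).comp u hinner).neg.div_const (2 * κ)).congr_deriv (by field_simp)
  rw [intervalIntegral.integral_eq_sub_of_hasDerivAt (fun u _ => hprim u)
    ((continuous_id.mul (hH.comp (by fun_prop))).intervalIntegrable 0 a)]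
  rw [zero_pow two_ne_zero, mul_zero, sub_zero]
  ring

noncomputable def besselI0Coeff (k : ℕ) : ℝ := ((k ! : ℝ) ^ 2)⁻¹

lemma summableEverywhere_besselI0Coeff : SummableEverywhere besselI0Coeff := fun x => by
  refine .of_norm_bounded (Real.summable_pow_div_factorial |x|) fun k => ?_
  have hk : (1 : ℝ) ≤ k ! := by exact_mod_cast Nat.factorial_pos k
  rw [besselI0Coeff, norm_mul, norm_pow, Real.norm_eq_abs, Real.norm_eq_abs,
    abs_of_pos (by positivity), div_eq_inv_mul]
  gcongr
  nlinarith

lemma derivCoeff_besselI0Coeff (k : ℕ) :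
    derivCoeff besselI0Coeff k = ((k ! : ℝ) * (k + 1)!)⁻¹ := by
  rw [derivCoeff, besselI0Coeff, Nat.factorial_succ]
  push_cast
  field_simp

lemma derivCoeff_natCast_mul_besselI0Coeff :
    derivCoeff (fun k => k * besselI0Coeff k) = besselI0Coeff := by
  ext k
  rw [derivCoeff, besselI0Coeff, besselI0Coeff, Nat.factorial_succ]
  push_cast
  field_simp

-- Bessel's equation `(x P')' = P` for `P(x) = I₀(2√x) = powerSum besselI0Coeff x`.
lemma hasDerivAt_mul_powerSum_derivCoeff_besselI0Coeff (x : ℝ) :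
    HasDerivAt (fun x => x * powerSum (derivCoeff besselI0Coeff) x)
      (powerSum besselI0Coeff x) x := by
  have hprim : (fun x => x * powerSum (derivCoeff besselI0Coeff) x) =
      powerSum (fun k => k * besselI0Coeff k) :=
    funext fun x => (powerSum_natCast_mul summableEverywhere_besselI0Coeff x).symm
  rw [hprim]
  exact (hasDerivAt_powerSum summableEverywhere_besselI0Coeff.natCast_mul x).congr_deriv
    (by rw [derivCoeff_natCast_mul_besselI0Coeff])

lemma besselI0_eq_powerSum (z : ℝ) : besselI0 z = powerSum besselI0Coeff ((z / 2) ^ 2) :=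
  tsum_congr fun k => by rw [besselI0Coeff, ← pow_mul]; ring

lemma besselI1_eq_powerSum (z : ℝ) :
    besselI1 z = z / 2 * powerSum (derivCoeff besselI0Coeff) ((z / 2) ^ 2) := by
  rw [besselI1, powerSum, ← tsum_mul_left]
  exact tsum_congr fun k => by rw [derivCoeff_besselI0Coeff, ← pow_mul]; ring

lemma F_eq_powerSum (lam c u s : ℝ) :
    F lam c u s =
      powerSum besselI0Coeff ((lam / (2 * c)) ^ 2 * c ^ 2 * s ^ 2 - (lam / (2 * c)) ^ 2 * u ^ 2) :=
  tsum_congr fun k => by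
    rw [besselI0Coeff, show (lam / (2 * c)) ^ 2 * c ^ 2 * s ^ 2 - (lam / (2 * c)) ^ 2 * u ^ 2 =
      (lam / (2 * c)) ^ 2 * (c ^ 2 * s ^ 2 - u ^ 2) by ring, mul_pow, ← pow_mul]
    ring

lemma hasDerivAt_primitive_besselCombination (p q r x : ℝ) :
    HasDerivAt
      (fun x => p * (x * powerSum (derivCoeff besselI0Coeff) x) +
        q * powerSum besselI0Coeff x + r * powerSum (derivCoeff besselI0Coeff) x)
      (p * powerSum besselI0Coeff x + q * powerSum (derivCoeff besselI0Coeff) x +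
        r * powerSum (derivCoeff (derivCoeff besselI0Coeff)) x) x :=
  (((hasDerivAt_mul_powerSum_derivCoeff_besselI0Coeff x).const_mul p).add
    ((hasDerivAt_powerSum summableEverywhere_besselI0Coeff x).const_mul q)).add
    ((hasDerivAt_powerSum summableEverywhere_besselI0Coeff.derivCoeff x).const_mul r)

lemma continuous_besselCombination (p q r : ℝ) :
    Continuous fun x => p * powerSum besselI0Coeff x +
      q * powerSum (derivCoeff besselI0Coeff) x +
        r * powerSum (derivCoeff (derivCoeff besselI0Coeff)) x := by
  have h0 := continuous_powerSum summableEverywhere_besselI0Coeff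
  have h1 := continuous_powerSum summableEverywhere_besselI0Coeff.derivCoeff
  have h2 := continuous_powerSum summableEverywhere_besselI0Coeff.derivCoeff.derivCoeff
  fun_prop

theorem mean_value_U_general
    (lam c t : ℝ) (hlam : 0 < lam) (hc : 0 < c) :
    (∫ u in (0 : ℝ)..(c * t), u * planarDensity lam c u t) +
        c * t * (Real.exp (-(lam * t)) * (1 + lam * t)) =
      Real.exp (-(lam * t)) *
        ((c * t + 2 * c / lam) * besselI0 (lam * t) + c * t * besselI1 (lam * t) -
          2 * c / lam) := by
  set B := (lam / (2 * c)) ^ 2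
  set β := B * c ^ 2
  have hB : B ≠ 0 := by positivity
  have hdens : ∀ u, u * planarDensity lam c u t = Real.exp (-(lam * t)) / c *
      (u * (-lam * powerSum besselI0Coeff (β * t ^ 2 - B * u ^ 2) +
        (2 * β * t + 2 / lam * (2 * β)) *
          powerSum (derivCoeff besselI0Coeff) (β * t ^ 2 - B * u ^ 2) +
        2 / lam * (2 * β * t) ^ 2 *
          powerSum (derivCoeff (derivCoeff besselI0Coeff)) (β * t ^ 2 - B * u ^ 2))) := by
    intro u
    simp only [planarDensity, F_eq_powerSum,
      deriv_powerSum_comp_sq summableEverywhere_besselI0Coeff,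
      iteratedDeriv_two_powerSum_comp_sq summableEverywhere_besselI0Coeff]
    ring
  simp_rw [hdens]
  rw [intervalIntegral.integral_const_mul, integral_mul_comp_sub_mul_sq
    (hasDerivAt_primitive_besselCombination _ _ _) (continuous_besselCombination _ _ _) hB]
  have hw : β * t ^ 2 = (lam * t / 2) ^ 2 := by simp only [β, B]; field_simp
  rw [show β * t ^ 2 - B * (c * t) ^ 2 = 0 by ring, hw, ← besselI0_eq_powerSum,
    besselI1_eq_powerSum]
  simp only [powerSum_zero, derivCoeff_besselI0Coeff, besselI0Coeff]
  simp only [β, B]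
  field_simp
  ring

theorem mean_value_U
    (lam c t : ℝ) (hlam : 0 < lam) (hc : 0 < c) (ht : 0 < t) :
    (∫ u in (0 : ℝ)..(c * t), u * planarDensity lam c u t) +
        c * t * (Real.exp (-(lam * t)) * (1 + lam * t)) =
      Real.exp (-(lam * t)) *
        ((c * t + 2 * c / lam) * besselI0 (lam * t) + c * t * besselI1 (lam * t) -
          2 * c / lam) :=
  mean_value_U_general lam c t hlam hc
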